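/- There is a ℂ-algebra isomorphism ℂ[x,y,z]/(4x³, 3y² + z², 2yz) ≅ ℂ[u,v,w]/(u³, v², w²). -/
import Mathlib

open MvPolynomial

noncomputable section

abbrev R3 : Type := MvPolynomial (Fin 3) ℂ

/-- The Jacobian ideal of the `U₁₂` polynomial `x⁴ + y³ + yz²`. -/
def J13a : Ideal R3 :=
  Ideal.span {4 * X 0 ^ 3, 3 * X 1 ^ 2 + X 2 ^ 2, 2 * X 1 * X 2}

/-- The Jacobian ideal of `x⁴ + y³ + z³` (up to scalars on generators). -/
def J13b : Ideal R3 := Ideal.span {X 0 ^ 3, X 1 ^ 2, X 2 ^ 2}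

namespace Stmt13Aux

def s : ℂ := (Real.sqrt 3 : ℝ)

lemma hs : s * s = 3 := by
  have h : (Real.sqrt 3) * (Real.sqrt 3) = 3 := Real.mul_self_sqrt (by norm_num)
  simp only [s]
  exact_mod_cast congrArg (fun x : ℝ => (x : ℂ)) h

lemma hs0 : s ≠ 0 := by
  intro h
  have := hs
  rw [h] at this
  norm_num at this

lemma hss : (C s : R3) * C s⁻¹ = 1 := by
  rw [← C_mul, mul_inv_cancel₀ hs0, C_1]

lemma hss3 : (C s : R3) * C s = 3 := by
  rw [← C_mul, hs]; exact map_ofNat C 3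

lemma h2 : (C (2⁻¹ : ℂ) : R3) * 2 = 1 := by
  rw [show (2:R3) = C 2 from (map_ofNat C 2).symm, ← C_mul]
  norm_num

lemma h4 : (C (4⁻¹ : ℂ) : R3) * 4 = 1 := by
  rw [show (4:R3) = C 4 from (map_ofNat C 4).symm, ← C_mul]
  norm_num

lemma h12a : (6:R3) * C (12⁻¹ : ℂ) + 2 * C (4⁻¹ : ℂ) = 1 := by
  rw [show (6:R3) = C 6 from (map_ofNat C 6).symm,
    show (2:R3) = C 2 from (map_ofNat C 2).symm, ← C_mul, ← C_mul, ← C_add]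
  norm_num

lemma h12b : (6:R3) * C (12⁻¹ : ℂ) - 2 * C (4⁻¹ : ℂ) = 0 := by
  rw [show (6:R3) = C 6 from (map_ofNat C 6).symm,
    show (2:R3) = C 2 from (map_ofNat C 2).symm, ← C_mul, ← C_mul, ← C_sub]
  norm_num

def f : R3 →ₐ[ℂ] R3 := aeval ![X 0, X 1 + X 2, C s * X 1 - C s * X 2]

def g : R3 →ₐ[ℂ] R3 :=
  aeval ![X 0, C (1/2) * X 1 + C (1/(2*s)) * X 2, C (1/2) * X 1 - C (1/(2*s)) * X 2]

lemma fg : f.comp g = AlgHom.id ℂ R3 := by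
  apply MvPolynomial.algHom_ext
  intro i
  fin_cases i
  · simp [f, g]
  · simp only [f, g]
    simp
    linear_combination (C (2⁻¹:ℂ) * (X 1 - X 2)) * hss + X 1 * h2
  · simp only [f, g]
    simp
    linear_combination (-(C (2⁻¹:ℂ) * (X 1 - X 2))) * hss + X 2 * h2

lemma gf : g.comp f = AlgHom.id ℂ R3 := by
  apply MvPolynomial.algHom_ext
  intro i
  fin_cases i
  · simp [f, g]
  · simp only [f, g]
    simp
    linear_combination X 1 * h2
  · simp only [f, g]
    simp
    linear_combination (2 * C (2⁻¹:ℂ) * X 2) * hss + X 2 * h2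

def e : R3 ≃ₐ[ℂ] R3 := AlgEquiv.ofAlgHom f g fg gf

lemma e_eq_f : ⇑(e : R3 →+* R3) = ⇑f := rfl

lemma hF1 : f (4 * X 0 ^ 3) = 4 * X 0 ^ 3 := by simp [f, map_ofNat]

lemma hF2 : f (3 * X 1 ^ 2 + X 2 ^ 2) = 6 * X 1 ^ 2 + 6 * X 2 ^ 2 := by
  simp only [f, map_add, map_mul, map_pow, map_sub, aeval_X, map_ofNat]
  simp
  linear_combination (X 1 ^ 2 + X 2 ^ 2 - 2 * X 1 * X 2) * hss3

lemma hF3 : f (2 * X 1 * X 2) = C s * (2 * X 1 ^ 2 - 2 * X 2 ^ 2) := by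
  simp [f, map_ofNat]
  ring

lemma mem3 {a b c p : R3} (x y z : R3) (h : p = x * a + y * b + z * c) :
    p ∈ Ideal.span {a, b, c} := by
  subst h
  refine add_mem (add_mem ?_ ?_) ?_ <;>
    exact Ideal.mul_mem_left _ _ (Ideal.subset_span (by simp))

lemma hmap : J13b = J13a.map (e : R3 →+* R3) := by
  apply le_antisymm
  · rw [J13b, Ideal.span_le]
    have m1 : (4 * X 0 ^ 3 : R3) ∈ J13a := Ideal.subset_span (by simp)
    have m2 : (3 * X 1 ^ 2 + X 2 ^ 2 : R3) ∈ J13a := Ideal.subset_span (by simp)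
    have m3 : (2 * X 1 * X 2 : R3) ∈ J13a := Ideal.subset_span (by simp)
    have i1 := Ideal.mem_map_of_mem (e : R3 →+* R3) m1
    have i2 := Ideal.mem_map_of_mem (e : R3 →+* R3) m2
    have i3 := Ideal.mem_map_of_mem (e : R3 →+* R3) m3
    rw [e_eq_f] at i1 i2 i3
    rw [hF1] at i1; rw [hF2] at i2; rw [hF3] at i3
    rintro p hp
    simp only [Set.mem_insert_iff, Set.mem_singleton_iff] at hp
    rcases hp with rfl | rfl | rfl
    · -- X 0 ^ 3
      have : (X 0 ^ 3 : R3) = C (4⁻¹:ℂ) * (4 * X 0 ^ 3) := by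
        linear_combination (-(X 0 ^ 3)) * h4
      rw [this]
      exact Ideal.mul_mem_left _ _ i1
    · -- X 1 ^ 2
      have : (X 1 ^ 2 : R3) = C (12⁻¹:ℂ) * (6 * X 1 ^ 2 + 6 * X 2 ^ 2)
          + (C (4⁻¹:ℂ) * C s⁻¹) * (C s * (2 * X 1 ^ 2 - 2 * X 2 ^ 2)) := by
        linear_combination (-(2 * C (4⁻¹:ℂ) * (X 1 ^ 2 - X 2 ^ 2))) * hss
          - (X 1 ^ 2) * h12a - (X 2 ^ 2) * h12b
      rw [this]
      exact add_mem (Ideal.mul_mem_left _ _ i2) (Ideal.mul_mem_left _ _ i3)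
    · -- X 2 ^ 2
      have : (X 2 ^ 2 : R3) = C (12⁻¹:ℂ) * (6 * X 1 ^ 2 + 6 * X 2 ^ 2)
          - (C (4⁻¹:ℂ) * C s⁻¹) * (C s * (2 * X 1 ^ 2 - 2 * X 2 ^ 2)) := by
        linear_combination (2 * C (4⁻¹:ℂ) * (X 1 ^ 2 - X 2 ^ 2)) * hss
          - (X 2 ^ 2) * h12a - (X 1 ^ 2) * h12b
      rw [this]
      exact sub_mem (Ideal.mul_mem_left _ _ i2) (Ideal.mul_mem_left _ _ i3)
  · rw [J13a, Ideal.map_span, Ideal.span_le]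
    rintro p ⟨q, hq, rfl⟩
    simp only [Set.mem_insert_iff, Set.mem_singleton_iff] at hq
    rw [show ⇑(e : R3 →+* R3) = ⇑f from rfl]
    rcases hq with rfl | rfl | rfl
    · rw [hF1]
      exact mem3 4 0 0 (by ring)
    · rw [hF2]
      exact mem3 0 6 6 (by ring)
    · rw [hF3]
      exact mem3 0 (C s * 2) (-(C s * 2)) (by ring)

end Stmt13Aux

/-- There is a `ℂ`-algebra isomorphism
`ℂ[x,y,z]/(4x³, 3y²+z², 2yz) ≅ ℂ[u,v,w]/(u³, v², w²)`. -/
theorem stmt13 : Nonempty ((R3 ⧸ J13a) ≃ₐ[ℂ] (R3 ⧸ J13b)) := by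
  exact ⟨Ideal.quotientEquivAlg J13a J13b Stmt13Aux.e Stmt13Aux.hmap⟩

end
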